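/- arXiv:2206.15100 — 2 statements merged into one kernel-verified Lean document; each statement's English description precedes it below -/
import Mathlib

section
/- For any p-string T and any i ≥ 0, ⟦Rot(T,i)⟧ = Rot(⟦T⟧, i). -/
/-! Common framework: parameterized strings over static alphabet `σ` and
parameter alphabet `π`.  A p-string is a `List (σ ⊕ π)`. -/

variable {σ π : Type*}

instance instInhabSum [Inhabited σ] : Inhabited (σ ⊕ π) := ⟨Sum.inl default⟩

/-- one right rotation: the last character moves to the front -/
def rotR1 {α : Type*} (W : List α) : List α := W.rotate (W.length - 1)

/-- `rotR W i` is the `i`-th right rotation `Rot(W, i)` -/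
def rotR {α : Type*} (W : List α) : ℕ → List α
  | 0 => W
  | i + 1 => rotR1 (rotR W i)

/-- 1-based access `W[i]` (junk default outside the range) -/
def get1 {α : Type*} [Inhabited α] (W : List α) (i : ℕ) : α := W.getD (i - 1) default

/-- the prev-encoding `⟨T⟩`, a list over `σ ⊕ ℕ∞` -/
def prevEnc [DecidableEq σ] [DecidableEq π] (T : List (σ ⊕ π)) : List (σ ⊕ ℕ∞) :=
  (List.range T.length).map fun k =>
    match T[k]? with
    | none => Sum.inr ⊤
    | some (Sum.inl a) => Sum.inl a
    | some (Sum.inr b) =>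
      match ((List.range k).filter fun j => T[j]? = some (Sum.inr b)).max? with
      | none => Sum.inr ⊤
      | some j => Sum.inr ((k - j : ℕ) : ℕ∞)

/-- number of distinct parameter characters occurring in `W` -/
def distinctParams [DecidableEq π] (W : List (σ ⊕ π)) : ℕ :=
  (W.filterMap Sum.getRight?).dedup.length

/-- the encoding `⟦T⟧`, a list over `σ ⊕ ℕ`:  a static character is kept; a
parameter character at (1-based) position `i` is replaced by the number of
distinct parameter characters in `Rot(T, n-i)[1:ℓ]` where `ℓ` is the leftmost
occurrence position of `T[i]` in `Rot(T, n-i)`. -/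
def encodeE [DecidableEq σ] [DecidableEq π] (T : List (σ ⊕ π)) : List (σ ⊕ ℕ) :=
  (List.range T.length).map fun k =>
    match T[k]? with
    | none => Sum.inr 0
    | some (Sum.inl a) => Sum.inl a
    | some (Sum.inr b) =>
      let R := rotR T (T.length - (k + 1))
      Sum.inr (distinctParams (R.take (R.idxOf (Sum.inr b) + 1)))

/-- order on prev-encoding characters: every static character is smaller than
every element of `ℕ∞` (and `ℕ∞` carries its usual order with `∞` on top) -/
def pvlt [LT σ] : (σ ⊕ ℕ∞) → (σ ⊕ ℕ∞) → Prop
  | Sum.inl a, Sum.inl b => a < b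
  | Sum.inl _, Sum.inr _ => True
  | Sum.inr _, Sum.inl _ => False
  | Sum.inr x, Sum.inr y => x < y

/-- `T` is a p-string of length ≥ 1 ending with the static character `d`,
which occurs nowhere else in `T`. -/
def EndsWith [DecidableEq σ] [DecidableEq π] (T : List (σ ⊕ π)) (d : σ) : Prop :=
  1 ≤ T.length ∧ T.getLast? = some (Sum.inl d) ∧ T.count (Sum.inl d) = 1

/-- `RA` represents the parameterized rotation array `RA_T` (0-based indices:
`RA_T[i] = (RA ⟨i-1⟩).val + 1`): the prev-encodings of the rotations are listed
in strictly increasing lexicographic order. -/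
def IsRA [LinearOrder σ] [DecidableEq π] (T : List (σ ⊕ π))
    (RA : Fin T.length ≃ Fin T.length) : Prop :=
  ∀ i j : Fin T.length, i < j →
    List.Lex pvlt (prevEnc (rotR T ((RA i).val + 1))) (prevEnc (rotR T ((RA j).val + 1)))

/-- `LF` represents the LF mapping: `LF_T(i) = j` iff `T_{RA_T[i]+1} = T_{RA_T[j]}`. -/
def IsLF [LinearOrder σ] [DecidableEq π] (T : List (σ ⊕ π))
    (RA LF : Fin T.length ≃ Fin T.length) : Prop :=
  ∀ i : Fin T.length, rotR T ((RA i).val + 2) = rotR T ((RA (LF i)).val + 1)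

/-- the pBWT array `L_T[i] = ⟦T_{RA_T[i]}⟧[n]` -/
def Larr [LinearOrder σ] [DecidableEq π] [Inhabited σ] (T : List (σ ⊕ π))
    (RA : Fin T.length ≃ Fin T.length) (i : Fin T.length) : σ ⊕ ℕ :=
  get1 (encodeE (rotR T ((RA i).val + 1))) T.length

/-- the array `F_T[i] = ⟦T_{RA_T[i]}⟧[1]` -/
def Farr [LinearOrder σ] [DecidableEq π] [Inhabited σ] (T : List (σ ⊕ π))
    (RA : Fin T.length ≃ Fin T.length) (i : Fin T.length) : σ ⊕ ℕ :=
  get1 (encodeE (rotR T ((RA i).val + 1))) 1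

/-- longest common prefix of two lists -/
def lcp {α : Type*} [DecidableEq α] : List α → List α → List α
  | a :: as, b :: bs => if a = b then a :: lcp as bs else []
  | _, _ => []

/-- `lcp∞(X, Y)`: the number of `∞`'s in the longest common prefix of `X` and `Y` -/
def lcpInf [DecidableEq σ] (X Y : List (σ ⊕ ℕ∞)) : ℕ :=
  (lcp X Y).count (Sum.inr ⊤)

/-- the `∞`-LCP array (1-based): `LCP∞_T[i] = lcp∞(⟨T_{RA_T[i]}⟩, ⟨T_{RA_T[i+1]}⟩)`
for `1 ≤ i < n`, and `0` otherwise. -/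
def LCPa [LinearOrder σ] [DecidableEq π] (T : List (σ ⊕ π))
    (RA : Fin T.length ≃ Fin T.length) (i : ℕ) : ℕ :=
  if h : 1 ≤ i ∧ i < T.length then
    lcpInf (prevEnc (rotR T ((RA ⟨i - 1, by omega⟩).val + 1)))
           (prevEnc (rotR T ((RA ⟨i, h.2⟩).val + 1)))
  else 0

/-- parameterized match: a bijection on `σ ⊕ π` fixing all static characters
renames `S` into `T` -/
def PMatch (S T : List (σ ⊕ π)) : Prop :=
  ∃ f : (σ ⊕ π) ≃ (σ ⊕ π), (∀ a : σ, f (Sum.inl a) = Sum.inl a) ∧ S.map f = T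

/-- leftmost (1-based) occurrence position of `c` in `W`, `0` if absent -/
def leftPos [DecidableEq σ] [DecidableEq π] (W : List (σ ⊕ π)) (c : σ ⊕ π) : ℕ :=
  if W.contains c then W.idxOf c + 1 else 0

/-- rightmost (1-based) occurrence position of `c` in `W`, `0` if absent -/
def rightPos [DecidableEq σ] [DecidableEq π] (W : List (σ ⊕ π)) (c : σ ⊕ π) : ℕ :=
  if W.contains c then W.length - W.reverse.idxOf c else 0

/-! The `k`-th entry of `⟦T⟧` is computed from `T[k]` and `Rot(T, n - (k + 1))`, which is the
left rotation `T.rotate (k + 1)`. Hence it depends only on the left rotation of `T` that ends at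
position `k`, so rotating `T` to the left rotates `⟦T⟧` the same way; and a right rotation is a
left rotation by `n - 1`. -/

/-- The entry `⟦T⟧` assigns to `c` when `R` is the rotation of `T` ending with `c`. -/
def encodeChar [DecidableEq σ] [DecidableEq π] (R : List (σ ⊕ π)) : σ ⊕ π → σ ⊕ ℕ
  | Sum.inl a => Sum.inl a
  | Sum.inr b => Sum.inr (distinctParams (R.take (R.idxOf (Sum.inr b) + 1)))

lemma rotR_eq_rotate {α : Type*} (W : List α) (i : ℕ) :
    rotR W i = W.rotate (i * (W.length - 1)) := by
  induction i with
  | zero => simp [rotR]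
  | succ i ih =>
    rw [rotR, rotR1, ih, List.length_rotate, List.rotate_rotate]
    ring_nf

lemma rotR_eq_rotate_sub {α : Type*} (W : List α) {i : ℕ} (hi : i ≤ W.length) :
    rotR W i = W.rotate (W.length - i) := by
  induction i with
  | zero => simp [rotR]
  | succ i ih =>
    rw [rotR, rotR1, ih (by omega), List.length_rotate, List.rotate_rotate, ← List.rotate_mod,
      show W.length - i + (W.length - 1) = (W.length - (i + 1)) + W.length by omega,
      Nat.add_mod_right, List.rotate_mod]

lemma length_encodeE [DecidableEq σ] [DecidableEq π] (T : List (σ ⊕ π)) :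
    (encodeE T).length = T.length := by
  simp [encodeE]

lemma getElem_encodeE [DecidableEq σ] [DecidableEq π] (T : List (σ ⊕ π)) {k : ℕ}
    (hk : k < (encodeE T).length) :
    (encodeE T)[k] = encodeChar (T.rotate (k + 1)) (T[k]'(length_encodeE T ▸ hk)) := by
  have hk' : k < T.length := length_encodeE T ▸ hk
  have hrot : T.rotate (k + 1) = rotR T (T.length - (k + 1)) := by
    rw [rotR_eq_rotate_sub T (by omega), Nat.sub_sub_self hk']
  rw [hrot]
  simp only [encodeE, List.getElem_map, List.getElem_range, List.getElem?_eq_getElem hk']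
  cases T[k] <;> rfl

theorem encodeE_rotate [DecidableEq σ] [DecidableEq π] (T : List (σ ⊕ π)) (m : ℕ) :
    encodeE (T.rotate m) = (encodeE T).rotate m := by
  refine List.ext_getElem (by simp [length_encodeE]) fun k hk hk' => ?_
  rw [getElem_encodeE, List.getElem_rotate, List.getElem_rotate, getElem_encodeE,
    List.rotate_rotate]
  simp only [length_encodeE]
  congr 1
  rw [← List.rotate_mod T (_ % _ + 1), Nat.mod_add_mod, List.rotate_mod]
  ring_nf

/-- For any p-string `T` and any `i ≥ 0`,
`⟦Rot(T, i)⟧ = Rot(⟦T⟧, i)`. -/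
theorem encode_rotR [DecidableEq σ] [DecidableEq π]
    (T : List (σ ⊕ π)) (i : ℕ) :
    encodeE (rotR T i) = rotR (encodeE T) i := by
  rw [rotR_eq_rotate, rotR_eq_rotate, length_encodeE, encodeE_rotate]
end

section
/- Let T be a p-string of length n ending with a special static character $ that occurs nowhere else in T. If 1 ≤ i < j ≤ n and L_T[i] = L_T[j], then LF_T(i) < LF_T(j). -/
/-! Common framework: parameterized strings over static alphabet `σ` and
parameter alphabet `π`.  A p-string is a `List (σ ⊕ π)`. -/

variable {σ π : Type*}

/-!
The rotation `T_{p+1}` is `T_p` with its last letter `c` moved to the front. On prev-encodings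
this shifts every entry one place to the right and changes at most one of them: at the first
occurrence of `c` in `T_p` (when `c` is a parameter) the entry `∞` becomes its distance to the new
front. Equal `L`-values mean that the two last letters are the same static letter, or parameters
whose first occurrences carry the same-numbered `∞` of the encoding. Hence, if `⟨T_p⟩ < ⟨T_q⟩`
first differ at position `t`, the changed entries either coincide before `t` or lie at or after
`t`, and in each case the comparison at `t` survives the shift (a changed entry at `t` only
becomes larger, and only on the `T_q` side). If `t` is the last position, the shifted encodings
coincide instead, which the strict order of the rotation array rules out.
-/

instance instLawfulBEqSum {α β : Type*} [BEq α] [LawfulBEq α] [BEq β] [LawfulBEq β] :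
    LawfulBEq (α ⊕ β) where
  rfl {x} := by
    cases x with
    | inl a => exact beq_self_eq_true a
    | inr b => exact beq_self_eq_true b
  eq_of_beq {x y} h := by
    cases x <;> cases y <;> first
      | exact congrArg _ (eq_of_beq h) | exact absurd h Bool.false_ne_true

theorem List.lex_map_range_iff {α : Type*} {r : α → α → Prop} {f g : ℕ → α} {n : ℕ} :
    Lex r ((range n).map f) ((range n).map g) ↔
      ∃ t < n, (∀ k < t, f k = g k) ∧ r (f t) (g t) := by
  induction n generalizing f g with
  | zero => simp
  | succ n ih =>
    simp only [range_succ_eq_map, map_cons, map_map, cons_lex_cons_iff, ih]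
    constructor
    · rintro (h | ⟨h0, t, ht, hpre, hr⟩)
      · exact ⟨0, n.succ_pos, by simp, h⟩
      · refine ⟨t + 1, by omega, fun k hk => ?_, hr⟩
        cases k with
        | zero => exact h0
        | succ k => exact hpre k (by omega)
    · rintro ⟨_ | t, ht, hpre, hr⟩
      · exact Or.inl hr
      · exact Or.inr ⟨hpre 0 (by omega), t, by omega, fun k hk => hpre (k + 1) (by omega), hr⟩

theorem List.idxOf_eq_iff_of_getElem? {α : Type*} [BEq α] [LawfulBEq α] {l : List α} {a : α}
    {k : ℕ} (h : l[k]? = some a) : l.idxOf a = k ↔ ∀ j < k, l[j]? ≠ some a := by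
  obtain ⟨hk, rfl⟩ := List.getElem?_eq_some_iff.1 h
  rw [List.idxOf, List.findIdx_eq hk]
  simp only [beq_self_eq_true, true_and, beq_eq_false_iff_ne]
  constructor
  · intro H j hj
    rw [List.getElem?_eq_getElem (by omega)]
    simpa using H j hj
  · intro H j hj
    simpa [List.getElem?_eq_getElem (show j < l.length by omega)] using H j hj

theorem List.idxOf_append_singleton_self {α : Type*} [BEq α] [LawfulBEq α] (l : List α)
    (a : α) :
    (l ++ [a]).idxOf a = l.idxOf a := by
  rw [List.idxOf_append]
  split_ifs with h
  · rfl
  · simp [List.idxOf_eq_length h]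

theorem List.filter_range_succ_cons {α : Type*} [DecidableEq α] (c x : α) (Z : List α)
    (k : ℕ) :
    ((List.range (k + 1)).filter fun j => (c :: Z)[j]? = some x) =
      (if c = x then [0] else []) ++
        ((List.range k).filter fun j => Z[j]? = some x).map Nat.succ := by
  rw [List.range_succ_eq_map, List.filter_cons, List.filter_map]
  split_ifs <;> simp_all [Function.comp_def]

theorem Nat.count_congr_of_lt {p q : ℕ → Prop} [DecidablePred p] [DecidablePred q] {n : ℕ}
    (h : ∀ k < n, p k ↔ q k) : Nat.count p n = Nat.count q n := by
  simp only [Nat.count_eq_card_filter_range]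
  exact congrArg _ (Finset.filter_congr fun k hk => h k (Finset.mem_range.1 hk))

theorem Nat.eq_of_count_succ_eq {p q : ℕ → Prop} [DecidablePred p] [DecidablePred q]
    {t l l' : ℕ} (hpq : ∀ k < t, p k ↔ q k) (hl : p l) (hl' : q l')
    (h : Nat.count p (l + 1) = Nat.count q (l' + 1)) (hlt : l < t) : l = l' := by
  have hql : q l := (hpq l hlt).1 hl
  have hcount : Nat.count p (l + 1) = Nat.count q (l + 1) :=
    Nat.count_congr_of_lt fun k hk => hpq k (by omega)
  refine Nat.count_injective hql hl' ?_
  rw [hcount, Nat.count_succ, Nat.count_succ, if_pos hql, if_pos hl'] at h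
  omega

section Rotation
variable {α : Type*}

theorem length_rotR1 (W : List α) : (rotR1 W).length = W.length :=
  List.length_rotate _ _

theorem length_rotR (W : List α) (k : ℕ) : (rotR W k).length = W.length := by
  induction k with
  | zero => rfl
  | succ k ih => rw [rotR, length_rotR1, ih]

theorem rotR1_append_singleton (l : List α) (c : α) : rotR1 (l ++ [c]) = c :: l := by
  rw [rotR1, List.length_append, List.length_singleton, Nat.add_sub_cancel,
    List.rotate_eq_drop_append_take (by simp), List.drop_left, List.take_left]
  rfl

end Rotation

section Pvlt
variable [Preorder σ]

theorem pvlt_irrefl (x : σ ⊕ ℕ∞) : ¬ pvlt x x := by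
  cases x <;> simp [pvlt]

theorem pvlt_asymm {x y : σ ⊕ ℕ∞} (h : pvlt x y) : ¬ pvlt y x := by
  cases x <;> cases y <;> simp_all [pvlt, lt_asymm]

theorem not_top_pvlt (y : σ ⊕ ℕ∞) : ¬ pvlt (Sum.inr ⊤) y := by
  cases y <;> simp [pvlt]

end Pvlt

section PrevEntry
variable [DecidableEq σ] [DecidableEq π]

def prevEntry (T : List (σ ⊕ π)) (k : ℕ) : σ ⊕ ℕ∞ :=
  match T[k]? with
  | none => Sum.inr ⊤
  | some (Sum.inl a) => Sum.inl a
  | some (Sum.inr b) =>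
    match ((List.range k).filter fun j => T[j]? = some (Sum.inr b)).max? with
    | none => Sum.inr ⊤
    | some j => Sum.inr ((k - j : ℕ) : ℕ∞)

theorem prevEnc_eq_map (T : List (σ ⊕ π)) :
    prevEnc T = (List.range T.length).map (prevEntry T) := rfl

theorem lex_prevEnc_iff [LT σ] {X Y : List (σ ⊕ π)} (hlen : X.length = Y.length) :
    List.Lex pvlt (prevEnc X) (prevEnc Y) ↔
      ∃ t < X.length, (∀ k < t, prevEntry X k = prevEntry Y k) ∧
        pvlt (prevEntry X t) (prevEntry Y t) := by
  rw [prevEnc_eq_map, prevEnc_eq_map, ← hlen, List.lex_map_range_iff]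

theorem prevEnc_eq_of_prevEntry_eq {X Y : List (σ ⊕ π)} (hlen : X.length = Y.length)
    (h : ∀ k < X.length, prevEntry X k = prevEntry Y k) : prevEnc X = prevEnc Y := by
  rw [prevEnc_eq_map, prevEnc_eq_map, ← hlen]
  exact List.map_congr_left fun k hk => h k (List.mem_range.1 hk)

variable {T Z : List (σ ⊕ π)} {k : ℕ}

theorem prevEntry_of_inl {a : σ} (h : T[k]? = some (Sum.inl a)) : prevEntry T k = Sum.inl a := by
  simp only [prevEntry, h]

theorem prevEntry_eq_top_iff {b : π} (h : T[k]? = some (Sum.inr b)) :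
    prevEntry T k = Sum.inr ⊤ ↔ T.idxOf (Sum.inr b) = k := by
  rw [List.idxOf_eq_iff_of_getElem? h]
  simp only [prevEntry, h]
  split
  · next hmax =>
    simpa [List.filter_eq_nil_iff] using hmax
  · next j hmax =>
    have hj := List.max?_mem hmax
    simp only [List.mem_filter, List.mem_range, decide_eq_true_eq] at hj
    simpa using ⟨j, hj⟩

theorem pvlt_prevEntry_succ [LT σ] (h : prevEntry T k ≠ Sum.inr ⊤) :
    pvlt (prevEntry T k) (Sum.inr ((k + 1 : ℕ) : ℕ∞)) := by
  revert h
  unfold prevEntry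
  split
  · simp
  · simp [pvlt]
  · split
    · simp
    · intro _
      show ((_ - _ : ℕ) : ℕ∞) < ((k + 1 : ℕ) : ℕ∞)
      exact_mod_cast Nat.lt_succ_of_le (Nat.sub_le _ _)

theorem prevEntry_congr {T' : List (σ ⊕ π)} (h : ∀ j ≤ k, T[j]? = T'[j]?) :
    prevEntry T k = prevEntry T' k := by
  have hfilter : ∀ c, ((List.range k).filter fun j => T[j]? = some c) =
      ((List.range k).filter fun j => T'[j]? = some c) := fun c =>
    List.filter_congr fun j hj => by rw [h j (List.mem_range.1 hj).le]
  simp only [prevEntry, h k le_rfl, hfilter]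

theorem prevEntry_append (W : List (σ ⊕ π)) (hk : k < T.length) :
    prevEntry (T ++ W) k = prevEntry T k :=
  prevEntry_congr fun j hj => List.getElem?_append_left (by omega)

theorem prevEntry_cons_succ (c : σ ⊕ π) (Z : List (σ ⊕ π)) (k : ℕ) :
    prevEntry (c :: Z) (k + 1) =
      if Z[k]? = some c ∧ prevEntry Z k = Sum.inr ⊤ then Sum.inr ((k + 1 : ℕ) : ℕ∞)
      else prevEntry Z k := by
  rcases hZ : Z[k]? with _ | a | b
  · simp [prevEntry, hZ]
  · simp [prevEntry, hZ]
  · simp only [prevEntry, List.getElem?_cons_succ, hZ, List.filter_range_succ_cons]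
    rcases hmax : ((List.range k).filter fun j => Z[j]? = some (Sum.inr b)).max? with _ | j
    · rw [List.max?_eq_none_iff.1 hmax]
      by_cases hc : c = Sum.inr b <;> simp [hc, eq_comm]
    · have hmax' : ((if c = Sum.inr b then [0] else []) ++ ((List.range k).filter
          fun j => Z[j]? = some (Sum.inr b)).map Nat.succ).max? = some (j + 1) := by
        rw [List.max?_eq_some_iff] at hmax ⊢
        refine ⟨List.mem_append_right _ (List.mem_map_of_mem hmax.1), fun i hi => ?_⟩
        simp only [List.mem_append, List.mem_map] at hi
        rcases hi with hi | ⟨i, hi, rfl⟩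
        · split_ifs at hi <;> simp_all
        · exact Nat.succ_le_succ (hmax.2 i hi)
      simp only [hmax, hmax', Nat.add_sub_add_right]
      exact (if_neg fun h => ENat.natCast_ne_top _ (Sum.inr_injective h.2)).symm

theorem prevEntry_inl_cons_succ (a : σ) (Z : List (σ ⊕ π)) (k : ℕ) :
    prevEntry (Sum.inl a :: Z) (k + 1) = prevEntry Z k := by
  rw [prevEntry_cons_succ, if_neg]
  rintro ⟨h, htop⟩
  rw [prevEntry_of_inl h] at htop
  exact Sum.inl_ne_inr htop

theorem prevEntry_inr_cons_succ (b : π) (hk : k < Z.length) :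
    prevEntry (Sum.inr b :: Z) (k + 1) =
      if k = Z.idxOf (Sum.inr b) then Sum.inr ((k + 1 : ℕ) : ℕ∞) else prevEntry Z k := by
  rw [prevEntry_cons_succ]
  congr 1
  apply propext
  constructor
  · rintro ⟨h, htop⟩
    exact ((prevEntry_eq_top_iff h).1 htop).symm
  · rintro rfl
    have h := List.getElem?_idxOf (List.idxOf_lt_length_iff.1 hk)
    exact ⟨h, (prevEntry_eq_top_iff h).2 rfl⟩

theorem prevEntry_append_inr_idxOf (Z : List (σ ⊕ π)) (b : π) :
    prevEntry (Z ++ [Sum.inr b]) (Z.idxOf (Sum.inr b)) = Sum.inr ⊤ := by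
  have h := List.getElem?_idxOf (List.mem_append_right Z (List.mem_singleton_self (Sum.inr b)))
  rw [List.idxOf_append_singleton_self] at h
  exact (prevEntry_eq_top_iff h).2 (List.idxOf_append_singleton_self Z _)

end PrevEntry

section DistinctParams
variable [DecidableEq π]

theorem distinctParams_append_inl (l : List (σ ⊕ π)) (a : σ) :
    distinctParams (l ++ [Sum.inl a]) = distinctParams l := by
  simp only [distinctParams, List.filterMap_append, List.filterMap_cons, Sum.getRight?_inl,
    List.filterMap_nil, List.append_nil]

variable [DecidableEq σ]

theorem distinctParams_append_inr (l : List (σ ⊕ π)) (b : π) :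
    distinctParams (l ++ [Sum.inr b]) =
      distinctParams l + if Sum.inr b ∈ l then 0 else 1 := by
  have hmem : b ∈ (l.filterMap Sum.getRight?).toFinset ↔ Sum.inr b ∈ l := by
    simp [List.mem_filterMap, Sum.getRight?_eq_some_iff]
  simp only [distinctParams, List.filterMap_append, ← List.card_toFinset, List.toFinset_append,
    List.filterMap_cons, Sum.getRight?_inr, List.filterMap_nil, List.toFinset_cons,
    List.toFinset_nil, insert_empty_eq, Finset.union_singleton]
  split_ifs with h
  · rw [Finset.card_insert_of_mem (hmem.2 h), Nat.add_zero]
  · rw [Finset.card_insert_of_notMem (mt hmem.1 h)]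

theorem distinctParams_take (T : List (σ ⊕ π)) {s : ℕ} (hs : s ≤ T.length) :
    distinctParams (T.take s) = Nat.count (fun k => prevEntry T k = Sum.inr ⊤) s := by
  induction s with
  | zero => rfl
  | succ s ih =>
    obtain ⟨x, hx⟩ : ∃ x, T[s]? = some x := ⟨_, List.getElem?_eq_getElem (by omega)⟩
    rw [List.take_add_one, hx, Option.toList_some, Nat.count_succ, ← ih (by omega)]
    rcases x with a | b
    · rw [distinctParams_append_inl, prevEntry_of_inl hx]
      simp
    · have hmem : Sum.inr b ∈ T := List.mem_of_getElem? hx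
      have hle : T.idxOf (Sum.inr b) ≤ s := Nat.lt_succ_iff.1 <|
        (List.mem_take_iff_idxOf_lt hmem).1
          (List.mem_of_getElem? ((List.getElem?_take_of_lt s.lt_succ_self).trans hx))
      simp only [distinctParams_append_inr, List.mem_take_iff_idxOf_lt hmem,
        prevEntry_eq_top_iff hx]
      split_ifs <;> omega

end DistinctParams

section LastLetter
variable [DecidableEq σ] [DecidableEq π] [Inhabited σ] (Z : List (σ ⊕ π))

theorem get1_encodeE_append_inl (a : σ) :
    get1 (encodeE (Z ++ [Sum.inl a])) (Z.length + 1) = Sum.inl a := by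
  simp [get1, encodeE]

theorem get1_encodeE_append_inr (b : π) :
    get1 (encodeE (Z ++ [Sum.inr b])) (Z.length + 1) =
      Sum.inr (Nat.count (fun k => prevEntry (Z ++ [Sum.inr b]) k = Sum.inr ⊤)
        (Z.idxOf (Sum.inr b) + 1)) := by
  simp only [get1, encodeE, List.length_append, List.length_singleton, Nat.add_sub_cancel,
    List.getD_eq_getElem?_getD, List.getElem?_map, List.getElem?_range Z.length.lt_succ_self,
    List.getElem?_concat_length, Nat.sub_self, rotR, Option.map_some, Option.getD_some,
    List.idxOf_append_singleton_self]
  rw [distinctParams_take]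
  simpa using List.idxOf_le_length

end LastLetter

section Step
variable [Preorder σ] [DecidableEq σ] [DecidableEq π] {Z W : List (σ ⊕ π)}

theorem lex_prevEnc_inl_cons (a : σ) (hlen : Z.length = W.length)
    (hlex : List.Lex pvlt (prevEnc (Z ++ [Sum.inl a])) (prevEnc (W ++ [Sum.inl a]))) :
    List.Lex pvlt (prevEnc (Sum.inl a :: Z)) (prevEnc (Sum.inl a :: W)) := by
  obtain ⟨t, ht, hpre, hlt⟩ := (lex_prevEnc_iff (by simp [hlen])).1 hlex
  have htZ : t < Z.length := by
    refine lt_of_le_of_ne (by simpa [Nat.lt_succ_iff] using ht) fun h => pvlt_irrefl (Sum.inl a) ?_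
    rwa [prevEntry_of_inl (a := a) (by simp [h]),
      prevEntry_of_inl (a := a) (by simp [h, hlen])] at hlt
  have hentry : ∀ {V : List (σ ⊕ π)} {k}, k < V.length →
      prevEntry (Sum.inl a :: V) (k + 1) = prevEntry (V ++ [Sum.inl a]) k := fun hk => by
    rw [prevEntry_inl_cons_succ, prevEntry_append _ hk]
  refine (lex_prevEnc_iff (by simp [hlen])).2 ⟨t + 1, by simpa, fun k hk => ?_, ?_⟩
  · cases k with
    | zero => rfl
    | succ k => rw [hentry (by omega), hentry (by omega), hpre k (by omega)]
  · rwa [hentry htZ, hentry (by omega)]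

theorem lex_prevEnc_inr_cons_or_eq (b b' : π) (hlen : Z.length = W.length)
    (hlex : List.Lex pvlt (prevEnc (Z ++ [Sum.inr b])) (prevEnc (W ++ [Sum.inr b'])))
    (hrank : Nat.count (fun k => prevEntry (Z ++ [Sum.inr b]) k = Sum.inr ⊤)
        (Z.idxOf (Sum.inr b) + 1) =
      Nat.count (fun k => prevEntry (W ++ [Sum.inr b']) k = Sum.inr ⊤)
        (W.idxOf (Sum.inr b') + 1)) :
    List.Lex pvlt (prevEnc (Sum.inr b :: Z)) (prevEnc (Sum.inr b' :: W)) ∨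
      prevEnc (Sum.inr b :: Z) = prevEnc (Sum.inr b' :: W) := by
  obtain ⟨t, ht, hpre, hlt⟩ := (lex_prevEnc_iff (by simp [hlen])).1 hlex
  have hentry : ∀ {V : List (σ ⊕ π)} {c : π} {k : ℕ}, k < V.length →
      prevEntry (Sum.inr c :: V) (k + 1) = if k = V.idxOf (Sum.inr c)
        then Sum.inr ((k + 1 : ℕ) : ℕ∞) else prevEntry (V ++ [Sum.inr c]) k := fun hk => by
    rw [prevEntry_inr_cons_succ _ hk, prevEntry_append _ hk]
  have hpq : ∀ k < t, prevEntry (Z ++ [Sum.inr b]) k = Sum.inr ⊤ ↔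
      prevEntry (W ++ [Sum.inr b']) k = Sum.inr ⊤ := fun k hk => by rw [hpre k hk]
  -- both first occurrences carry the same-numbered `∞`, so they coincide once one of them
  -- lies in the common prefix
  have hsame : ∀ j < t, (j = Z.idxOf (Sum.inr b) ↔ j = W.idxOf (Sum.inr b')) := by
    have hZ := prevEntry_append_inr_idxOf Z b
    have hW := prevEntry_append_inr_idxOf W b'
    refine fun j hj => ⟨fun h => ?_, fun h => ?_⟩
    · subst h
      exact Nat.eq_of_count_succ_eq hpq hZ hW hrank hj
    · subst h
      exact Nat.eq_of_count_succ_eq (fun k hk => (hpq k hk).symm) hW hZ hrank.symm hj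
  have htl : t ≠ Z.idxOf (Sum.inr b) := fun h => by
    rw [h, prevEntry_append_inr_idxOf] at hlt
    exact not_top_pvlt _ hlt
  have hprefix : ∀ k ≤ t, k < Z.length + 1 →
      prevEntry (Sum.inr b :: Z) k = prevEntry (Sum.inr b' :: W) k := by
    rintro (_ | j) hjt hjZ
    · rfl
    · rw [hentry (by omega), hentry (by omega), hpre j (by omega)]
      simp only [hsame j (by omega)]
  rcases eq_or_lt_of_le (show t ≤ Z.length by simpa [Nat.lt_succ_iff] using ht) with htZ | htZ
  · exact Or.inr <| prevEnc_eq_of_prevEntry_eq (by simp [hlen])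
      fun k hk => hprefix k (by simp at hk; omega) (by simpa using hk)
  refine Or.inl <| (lex_prevEnc_iff (by simp [hlen])).2
    ⟨t + 1, by simpa, fun k hk => hprefix k (by omega) (by omega), ?_⟩
  rw [hentry htZ, hentry (by omega), if_neg htl]
  split_ifs
  · refine pvlt_prevEntry_succ fun h => ?_
    rw [h] at hlt
    exact not_top_pvlt _ hlt
  · exact hlt

end Step

theorem lex_prevEnc_rotR1_or_eq [Preorder σ] [DecidableEq σ] [DecidableEq π] [Inhabited σ]
    {X Y : List (σ ⊕ π)} (hlen : X.length = Y.length)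
    (hlex : List.Lex pvlt (prevEnc X) (prevEnc Y))
    (hL : get1 (encodeE X) X.length = get1 (encodeE Y) Y.length) :
    List.Lex pvlt (prevEnc (rotR1 X)) (prevEnc (rotR1 Y)) ∨
      prevEnc (rotR1 X) = prevEnc (rotR1 Y) := by
  rcases X.eq_nil_or_concat' with rfl | ⟨Z, c, rfl⟩
  · rw [List.eq_nil_of_length_eq_zero hlen.symm] at hlex
    exact absurd hlex List.not_lex_nil
  rcases Y.eq_nil_or_concat' with rfl | ⟨W, c', rfl⟩
  · simp at hlen
  simp only [List.length_append, List.length_singleton, Nat.add_right_cancel_iff] at hlen hL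
  rw [rotR1_append_singleton, rotR1_append_singleton]
  rcases c with a | b <;> rcases c' with a' | b'
  · rw [get1_encodeE_append_inl, get1_encodeE_append_inl, Sum.inl.injEq] at hL
    subst hL
    exact Or.inl (lex_prevEnc_inl_cons a hlen hlex)
  · rw [get1_encodeE_append_inl, get1_encodeE_append_inr] at hL
    exact absurd hL Sum.inl_ne_inr
  · rw [get1_encodeE_append_inr, get1_encodeE_append_inl] at hL
    exact absurd hL.symm Sum.inl_ne_inr
  · rw [get1_encodeE_append_inr, get1_encodeE_append_inr, Sum.inr.injEq] at hL
    exact lex_prevEnc_inr_cons_or_eq b b' hlen hlex hL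

theorem LF_lt_of_Larr_eq_general [LinearOrder σ] [DecidableEq π] [Inhabited σ]
    (T : List (σ ⊕ π))
    (RA : Fin T.length ≃ Fin T.length) (hRA : IsRA T RA)
    (LF : Fin T.length ≃ Fin T.length) (hLF : IsLF T RA LF)
    (i j : Fin T.length) (hij : i < j) (hL : Larr T RA i = Larr T RA j) :
    LF i < LF j := by
  have hstep := lex_prevEnc_rotR1_or_eq (by simp only [length_rotR]) (hRA i j hij)
    (by simpa only [Larr, length_rotR] using hL)
  rw [← rotR, ← rotR, hLF i, hLF j] at hstep
  rcases lt_trichotomy (LF i) (LF j) with h | h | h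
  · exact h
  · exact absurd (LF.injective h) hij.ne
  · have hback := hRA _ _ h
    rcases hstep with hstep | hstep
    · exact absurd hback (List.lex_asymm pvlt_asymm hstep)
    · rw [hstep] at hback
      exact absurd hback (List.lex_irrefl pvlt_irrefl _)

/-- If `1 ≤ i < j ≤ n` and `L_T[i] = L_T[j]`, then
`LF_T(i) < LF_T(j)`. -/
theorem LF_lt_of_Larr_eq [LinearOrder σ] [DecidableEq π] [Inhabited σ]
    (d : σ) (hd : ∀ a : σ, d ≤ a)
    (T : List (σ ⊕ π)) (hT : EndsWith T d)
    (RA : Fin T.length ≃ Fin T.length) (hRA : IsRA T RA)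
    (LF : Fin T.length ≃ Fin T.length) (hLF : IsLF T RA LF)
    (i j : Fin T.length) (hij : i < j) (hL : Larr T RA i = Larr T RA j) :
    LF i < LF j :=
  LF_lt_of_Larr_eq_general T RA hRA LF hLF i j hij hL
end
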